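/- arXiv:2009.08038 — 2 statements merged into one kernel-verified Lean document; each statement's English description precedes it below -/
import Mathlib

section
/- Let ψ ∈ (0, π), D^h > 0, l(φ) = D^h/(cos φ − sin φ cot ψ), and let 0 < φ_l < ψ and ψ + π < φ_u < 2π. Then ∫_0^{φ_l} l(φ)²/2 dφ + ∫_{φ_u}^{2π} l(φ)²/2 dφ = (1/2) sin(φ_l − φ_u) · l(φ_l) · l(φ_u). -/
/-!
With `g φ = cos φ - sin φ · c`, one has `cos φ · g φ + sin φ · (sin φ + cos φ · c) = 1`, so
`sin φ / g φ` is an antiderivative of `1 / g φ ^ 2` wherever `g` does not vanish. Integrating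
`(D / g)² / 2` therefore only involves boundary values of `sin / g`; those at `0` and `2π`
vanish, and the two remaining ones combine, via `sin a · g b - sin b · g a = sin (a - b)`,
into the area of the triangle spanned by the two boundary points of the RIS line.
-/

open Real intervalIntegral

section SinDivCosSubSinMul

variable (c : ℝ)

theorem hasDerivAt_sin_div_cos_sub_sin_mul {φ : ℝ} (hφ : cos φ - sin φ * c ≠ 0) :
    HasDerivAt (fun φ => sin φ / (cos φ - sin φ * c)) (1 / (cos φ - sin φ * c) ^ 2) φ := by
  have hden : HasDerivAt (fun φ => cos φ - sin φ * c) (-sin φ - cos φ * c) φ :=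
    (hasDerivAt_cos φ).sub ((hasDerivAt_sin φ).mul_const c)
  refine ((hasDerivAt_sin φ).div hden hφ).congr_deriv ?_
  rw [← sin_sq_add_cos_sq φ]
  ring

theorem integral_div_cos_sub_sin_mul_sq {a b : ℝ} (D : ℝ) (hab : a ≤ b)
    (hne : ∀ φ ∈ Set.Icc a b, cos φ - sin φ * c ≠ 0) :
    ∫ φ in a..b, (D / (cos φ - sin φ * c)) ^ 2 / 2
      = D ^ 2 / 2 * (sin b / (cos b - sin b * c) - sin a / (cos a - sin a * c)) := by
  have hcont : ContinuousOn (fun φ => (D / (cos φ - sin φ * c)) ^ 2 / 2) (Set.Icc a b) :=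
    ((continuousOn_const.div (by fun_prop) hne).pow 2).div_const 2
  rw [integral_eq_sub_of_hasDerivAt (f := fun φ => D ^ 2 / 2 * (sin φ / (cos φ - sin φ * c)))
    (fun φ hmem => ?_) (hcont.intervalIntegrable_of_Icc hab), mul_sub]
  have hφ := hne φ (Set.uIcc_of_le hab ▸ hmem)
  refine ((hasDerivAt_sin_div_cos_sub_sin_mul c hφ).const_mul (D ^ 2 / 2)).congr_deriv ?_
  field_simp

theorem sin_mul_cos_sub_sin_mul_sub (a b : ℝ) :
    sin a * (cos b - sin b * c) - sin b * (cos a - sin a * c) = sin (a - b) := by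
  rw [sin_sub]; ring

end SinDivCosSubSinMul

theorem stmt4_general (ψ Dh φl φu : ℝ)
    (hφl : 0 < φl) (hφu2 : φu < 2 * π)
    (l : ℝ → ℝ) (hl : ∀ φ, l φ = Dh / (Real.cos φ - Real.sin φ * Real.cot ψ))
    (hpos1 : ∀ φ ∈ Set.Icc 0 φl, 0 < Real.cos φ - Real.sin φ * Real.cot ψ)
    (hpos2 : ∀ φ ∈ Set.Icc φu (2 * π), 0 < Real.cos φ - Real.sin φ * Real.cot ψ) :
    (∫ φ in (0 : ℝ)..φl, l φ ^ 2 / 2) + (∫ φ in φu..(2 * π), l φ ^ 2 / 2)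
      = 1 / 2 * Real.sin (φl - φu) * l φl * l φu := by
  simp only [hl]
  rw [integral_div_cos_sub_sin_mul_sq _ _ hφl.le fun φ hφ => (hpos1 φ hφ).ne',
    integral_div_cos_sub_sin_mul_sq _ _ hφu2.le fun φ hφ => (hpos2 φ hφ).ne',
    sin_zero, sin_two_pi, ← sin_mul_cos_sub_sin_mul_sub (cot ψ) φl φu]
  have hgl := (hpos1 φl ⟨hφl.le, le_rfl⟩).ne'
  have hgu := (hpos2 φu ⟨le_rfl, hφu2.le⟩).ne'
  generalize cos φl - sin φl * cot ψ = gl at hgl ⊢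
  generalize cos φu - sin φu * cot ψ = gu at hgu ⊢
  field_simp
  ring

/-- ∫₀^{φ_l} l²/2 + ∫_{φ_u}^{2π} l²/2 = (1/2) sin(φ_l−φ_u) l(φ_l) l(φ_u),
where l(φ) = D^h/(cosφ − sinφ·cotψ). -/
theorem stmt4 (ψ Dh φl φu : ℝ) (hψ : ψ ∈ Set.Ioo 0 π) (hDh : 0 < Dh)
    (hφl : 0 < φl) (hφlψ : φl < ψ) (hφu : ψ + π < φu) (hφu2 : φu < 2 * π)
    (l : ℝ → ℝ) (hl : ∀ φ, l φ = Dh / (Real.cos φ - Real.sin φ * Real.cot ψ))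
    (hpos1 : ∀ φ ∈ Set.Icc 0 φl, 0 < Real.cos φ - Real.sin φ * Real.cot ψ)
    (hpos2 : ∀ φ ∈ Set.Icc φu (2 * π), 0 < Real.cos φ - Real.sin φ * Real.cot ψ) :
    (∫ φ in (0 : ℝ)..φl, l φ ^ 2 / 2) + (∫ φ in φu..(2 * π), l φ ^ 2 / 2)
      = 1 / 2 * Real.sin (φl - φu) * l φl * l φu :=
  stmt4_general ψ Dh φl φu hφl hφu2 l hl hpos1 hpos2
end

section
/- Let c : [0, 2π) → ℝ_{≥0} be defined by c(φ) = l(φ) for φ ∈ [0, φ_l) ∪ (φ_u, 2π) and c(φ) = d_th(φ) for φ ∈ [φ_l, φ_u], where 0 ≤ φ_l < φ_u < 2π, d_th is continuous, and d_th(φ_l) = l(φ_l), d_th(φ_u) = l(φ_u), with l(φ) = D^h/(cos φ − sin φ cot ψ). Then the polar area ∫_0^{2π} c(φ)²/2 dφ equals ∫_{φ_l}^{φ_u} d_th(φ)²/2 dφ + (1/2) sin(φ_l − φ_u) l(φ_l) l(φ_u). -/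
/-!
In polar coordinates the line `x - k y = D` is `r = D / (cos φ - k sin φ)`, and the sector area
`∫ r² / 2` it cuts out between two directions `a < b` is the area `½ r(a) r(b) sin (b - a)` of the
triangle spanned by the origin and the two points of the line. The primitive behind this,
`D² / (2 (1 + k²)) · (sin φ + k cos φ) / (cos φ - k sin φ)`, is `2π`-periodic, so the two arcs
`[0, φ_l]` and `[φ_u, 2π]` on which the cell is bounded by the line together contribute one
triangle, with directions `φ_u` and `φ_l + 2π`.
-/

open Real intervalIntegral Set

noncomputable section

namespace PolarLine

def radius (D k φ : ℝ) : ℝ := D / (cos φ - sin φ * k)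

def sectorPrimitive (D k φ : ℝ) : ℝ :=
  D ^ 2 / (2 * (1 + k ^ 2)) * ((sin φ + k * cos φ) / (cos φ - sin φ * k))

variable {D k : ℝ}

theorem hasDerivAt_sectorPrimitive {x : ℝ} (hx : cos x - sin x * k ≠ 0) :
    HasDerivAt (sectorPrimitive D k) (radius D k x ^ 2 / 2) x := by
  have hnum : HasDerivAt (fun φ => sin φ + k * cos φ) (cos x - sin x * k) x :=
    ((hasDerivAt_sin x).add ((hasDerivAt_cos x).const_mul k)).congr_deriv (by ring)
  have hden : HasDerivAt (fun φ => cos φ - sin φ * k) (-(sin x + k * cos x)) x :=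
    ((hasDerivAt_cos x).sub ((hasDerivAt_sin x).mul_const k)).congr_deriv (by ring)
  refine ((hnum.div hden hx).const_mul (D ^ 2 / (2 * (1 + k ^ 2)))).congr_deriv ?_
  have hk : 1 + k ^ 2 ≠ 0 := by positivity
  have hpyth : (cos x - sin x * k) * (cos x - sin x * k) - (sin x + k * cos x) * -(sin x + k * cos x)
      = 1 + k ^ 2 := by
    linear_combination (1 + k ^ 2) * sin_sq_add_cos_sq x
  rw [hpyth, radius]
  field_simp

theorem sectorPrimitive_periodic : Function.Periodic (sectorPrimitive D k) (2 * π) := by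
  intro φ
  simp only [sectorPrimitive, sin_add_two_pi, cos_add_two_pi]

theorem sectorPrimitive_sub {a b : ℝ} (ha : cos a - sin a * k ≠ 0) (hb : cos b - sin b * k ≠ 0) :
    sectorPrimitive D k b - sectorPrimitive D k a
      = 1 / 2 * sin (b - a) * radius D k a * radius D k b := by
  have hk : 1 + k ^ 2 ≠ 0 := by positivity
  have key : (sin b + k * cos b) * (cos a - sin a * k) - (cos b - sin b * k) * (sin a + k * cos a)
      = (1 + k ^ 2) * sin (b - a) := by
    rw [sin_sub]; ring
  simp only [sectorPrimitive, radius]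
  rw [← mul_sub, div_sub_div _ _ hb ha, key]
  field_simp

theorem intervalIntegrable_radius_sq {a b : ℝ} (h : ∀ φ ∈ uIcc a b, cos φ - sin φ * k ≠ 0) :
    IntervalIntegrable (fun φ => radius D k φ ^ 2 / 2) MeasureTheory.volume a b := by
  refine (((continuousOn_const.div ?_ h).pow 2).div_const 2).intervalIntegrable
  fun_prop

theorem integral_radius_sq {a b : ℝ} (h : ∀ φ ∈ uIcc a b, cos φ - sin φ * k ≠ 0) :
    ∫ φ in a..b, radius D k φ ^ 2 / 2 = sectorPrimitive D k b - sectorPrimitive D k a :=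
  integral_eq_sub_of_hasDerivAt (fun x hx => hasDerivAt_sectorPrimitive (h x hx))
    (intervalIntegrable_radius_sq h)

end PolarLine

theorem intervalIntegral.integral_eq_add_add_of_eqOn_uIoo {E : Type*} [NormedAddCommGroup E]
    [NormedSpace ℝ E] {f g₁ g₂ g₃ : ℝ → E} {a b c d : ℝ}
    (h₁ : IntervalIntegrable g₁ MeasureTheory.volume a b)
    (h₂ : IntervalIntegrable g₂ MeasureTheory.volume b c)
    (h₃ : IntervalIntegrable g₃ MeasureTheory.volume c d)
    (e₁ : EqOn f g₁ (uIoo a b)) (e₂ : EqOn f g₂ (uIoo b c)) (e₃ : EqOn f g₃ (uIoo c d)) :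
    ∫ x in a..d, f x = (∫ x in a..b, g₁ x) + (∫ x in b..c, g₂ x) + ∫ x in c..d, g₃ x := by
  have hf₁ := h₁.congr_uIoo e₁.symm
  have hf₂ := h₂.congr_uIoo e₂.symm
  have hf₃ := h₃.congr_uIoo e₃.symm
  rw [← integral_add_adjacent_intervals (hf₁.trans hf₂) hf₃,
    ← integral_add_adjacent_intervals hf₁ hf₂,
    integral_congr_uIoo e₁, integral_congr_uIoo e₂, integral_congr_uIoo e₃]

theorem stmt9_general (ψ Dh φl φu : ℝ)
    (hφl : 0 < φl) (hφlψ : φl < ψ) (hφu : ψ + π < φu) (hφu2 : φu < 2 * π)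
    (l : ℝ → ℝ) (hldef : ∀ φ, l φ = Dh / (Real.cos φ - Real.sin φ * Real.cot ψ))
    (hpos1 : ∀ φ ∈ Set.Icc 0 φl, 0 < Real.cos φ - Real.sin φ * Real.cot ψ)
    (hpos2 : ∀ φ ∈ Set.Icc φu (2 * π), 0 < Real.cos φ - Real.sin φ * Real.cot ψ)
    (dth : ℝ → ℝ)
    (hdcont : ContinuousOn dth (Set.Icc φl φu))
    (c : ℝ → ℝ)
    (hc1 : ∀ φ ∈ Set.Ico 0 φl ∪ Set.Ioo φu (2 * π), c φ = l φ)
    (hc2 : ∀ φ ∈ Set.Icc φl φu, c φ = dth φ) :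
    (∫ φ in (0 : ℝ)..(2 * π), c φ ^ 2 / 2)
      = (∫ φ in φl..φu, dth φ ^ 2 / 2)
        + 1 / 2 * Real.sin (φl - φu) * l φl * l φu := by
  obtain rfl : l = PolarLine.radius Dh (cot ψ) := funext hldef
  have hlu : φl ≤ φu := by linarith [pi_pos]
  have hne1 : ∀ φ ∈ uIcc 0 φl, cos φ - sin φ * cot ψ ≠ 0 := fun φ hφ =>
    (hpos1 φ (uIcc_of_le hφl.le ▸ hφ)).ne'
  have hne2 : ∀ φ ∈ uIcc φu (2 * π), cos φ - sin φ * cot ψ ≠ 0 := fun φ hφ =>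
    (hpos2 φ (uIcc_of_le hφu2.le ▸ hφ)).ne'
  rw [integral_eq_add_add_of_eqOn_uIoo (PolarLine.intervalIntegrable_radius_sq hne1)
      (((hdcont.pow 2).div_const 2).intervalIntegrable_of_Icc hlu)
      (PolarLine.intervalIntegrable_radius_sq hne2)
      (fun φ hφ => by rw [uIoo_of_le hφl.le] at hφ; rw [hc1 φ (Or.inl ⟨hφ.1.le, hφ.2⟩)])
      (fun φ hφ => by rw [uIoo_of_le hlu] at hφ; rw [Pi.pow_apply, hc2 φ (Ioo_subset_Icc_self hφ)])
      (fun φ hφ => by rw [uIoo_of_le hφu2.le] at hφ; rw [hc1 φ (Or.inr hφ)]),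
    PolarLine.integral_radius_sq hne1, PolarLine.integral_radius_sq hne2,
    PolarLine.sectorPrimitive_periodic.eq]
  simp only [Pi.pow_apply]
  linear_combination PolarLine.sectorPrimitive_sub (hne2 φu left_mem_uIcc) (hne1 φl right_mem_uIcc)

/-- Theorem 2 of the paper: the polar area of the coverage region
with effective radius c (equal to l off [φ_l,φ_u] and to d_th on [φ_l,φ_u]) equals
∫_{φ_l}^{φ_u} d_th²/2 + (1/2) sin(φ_l−φ_u) l(φ_l) l(φ_u). -/
theorem stmt9 (ψ Dh φl φu : ℝ) (hψ : ψ ∈ Set.Ioo 0 π) (hDh : 0 < Dh)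
    (hφl : 0 < φl) (hφlψ : φl < ψ) (hφu : ψ + π < φu) (hφu2 : φu < 2 * π)
    (l : ℝ → ℝ) (hldef : ∀ φ, l φ = Dh / (Real.cos φ - Real.sin φ * Real.cot ψ))
    (hpos1 : ∀ φ ∈ Set.Icc 0 φl, 0 < Real.cos φ - Real.sin φ * Real.cot ψ)
    (hpos2 : ∀ φ ∈ Set.Icc φu (2 * π), 0 < Real.cos φ - Real.sin φ * Real.cot ψ)
    (dth : ℝ → ℝ) (hdnn : ∀ φ, 0 ≤ dth φ)
    (hdcont : ContinuousOn dth (Set.Icc φl φu))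
    (hmatchl : dth φl = l φl) (hmatchu : dth φu = l φu)
    (c : ℝ → ℝ)
    (hc1 : ∀ φ ∈ Set.Ico 0 φl ∪ Set.Ioo φu (2 * π), c φ = l φ)
    (hc2 : ∀ φ ∈ Set.Icc φl φu, c φ = dth φ) :
    (∫ φ in (0 : ℝ)..(2 * π), c φ ^ 2 / 2)
      = (∫ φ in φl..φu, dth φ ^ 2 / 2)
        + 1 / 2 * Real.sin (φl - φu) * l φl * l φu :=
  stmt9_general ψ Dh φl φu hφl hφlψ hφu hφu2 l hldef hpos1 hpos2 dth hdcont c hc1 hc2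
end
end
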